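/- arXiv:0902.4542 — 11 statements merged into one kernel-verified Lean document; each statement's English description precedes it below -/
import Mathlib

section
/- Let G be a torsion-free group in which the centralizer of every nontrivial element is a cyclic group. Then G has the unique root property, i.e., for all x, y ∈ G and every positive integer n, x^n = y^n implies x = y. -/
/-- If `G` is a torsion-free group in which the centralizer of every nontrivial element
is cyclic, then `G` has the unique root property. -/
theorem stmt_0 (G : Type*) [Group G]
    (htf : ∀ g : G, g ≠ 1 → ¬IsOfFinOrder g)
    (hcent : ∀ x : G, x ≠ 1 → IsCyclic (Subgroup.centralizer {x})) :
    ∀ (x y : G) (n : ℕ), 0 < n → x ^ n = y ^ n → x = y := by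
  have htf' : ∀ (g : G) (n : ℕ), 0 < n → g ^ n = 1 → g = 1 := by
    intro g n hn h
    by_contra hg
    exact htf g hg (isOfFinOrder_iff_pow_eq_one.mpr ⟨n, hn, h⟩)
  intro x y n hn hxy
  by_cases hx : x = 1
  · subst hx
    exact (htf' y n hn (by simpa using hxy.symm)).symm
  · have hz : x ^ n ≠ 1 := fun h => hx (htf' x n hn h)
    have hxmem : x ∈ Subgroup.centralizer {x ^ n} := by
      rw [Subgroup.mem_centralizer_singleton_iff]
      exact (Commute.self_pow x n).eq
    have hymem : y ∈ Subgroup.centralizer {x ^ n} := by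
      rw [Subgroup.mem_centralizer_singleton_iff, hxy]
      exact (Commute.self_pow y n).eq
    obtain ⟨g, hg⟩ := (hcent (x ^ n) hz).exists_generator
    obtain ⟨a, ha⟩ := hg ⟨x, hxmem⟩
    obtain ⟨b, hb⟩ := hg ⟨y, hymem⟩
    have hxg : (g : G) ^ a = x := congrArg Subtype.val ha
    have hyg : (g : G) ^ b = y := congrArg Subtype.val hb
    have hgne : (g : G) ≠ 1 := by
      intro h
      exact hx (by rw [← hxg, h, one_zpow])
    have hinj : Function.Injective fun m : ℤ => (g : G) ^ m :=
      injective_zpow_iff_not_isOfFinOrder.mpr (htf _ hgne)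
    have hpow : (g : G) ^ (a * (n : ℤ)) = (g : G) ^ (b * (n : ℤ)) := by
      rw [zpow_mul, zpow_mul, hxg, hyg, zpow_natCast, zpow_natCast, hxy]
    have hab : a = b := mul_right_cancel₀ (by exact_mod_cast hn.ne') (hinj hpow)
    rw [← hxg, ← hyg, hab]
end

section
/- Let G be a group with the unique root property, let H1 and H2 be subgroups of G, and let φ1 : H1 → G and φ2 : H2 → G be group homomorphisms. Suppose there exists a subgroup H of finite index in G with H ≤ H1 ∩ H2 such that φ1(h) = φ2(h) for all h ∈ H. Then φ1(h) = φ2(h) for all h ∈ H1 ∩ H2. -/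
/-- If `G` has the unique root property and two homomorphisms `φ1 : H1 → G`, `φ2 : H2 → G`
agree on a finite-index subgroup `H ≤ H1 ⊓ H2`, then they agree on all of `H1 ⊓ H2`. -/
theorem stmt_2 (G : Type*) [Group G]
    (hurp : ∀ (x y : G) (n : ℕ), 0 < n → x ^ n = y ^ n → x = y)
    (H1 H2 H : Subgroup G)
    (φ1 : H1 →* G) (φ2 : H2 →* G)
    (hH : H.FiniteIndex) (hle : H ≤ H1 ⊓ H2)
    (hagree : ∀ (x : G) (hx : x ∈ H),
      φ1 ⟨x, (Subgroup.mem_inf.mp (hle hx)).1⟩ = φ2 ⟨x, (Subgroup.mem_inf.mp (hle hx)).2⟩) :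
    ∀ (x : G) (hx : x ∈ H1 ⊓ H2),
      φ1 ⟨x, (Subgroup.mem_inf.mp hx).1⟩ = φ2 ⟨x, (Subgroup.mem_inf.mp hx).2⟩ := by
  intro x hx
  obtain ⟨n, hn, -, hxn⟩ := Subgroup.exists_pow_mem_of_index_ne_zero hH.index_ne_zero x
  apply hurp _ _ n hn
  have h1 : (⟨x, (Subgroup.mem_inf.mp hx).1⟩ : H1) ^ n = ⟨x ^ n, (Subgroup.mem_inf.mp (hle hxn)).1⟩ := by
    ext; simp
  have h2 : (⟨x, (Subgroup.mem_inf.mp hx).2⟩ : H2) ^ n = ⟨x ^ n, (Subgroup.mem_inf.mp (hle hxn)).2⟩ := by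
    ext; simp
  rw [← map_pow, ← map_pow, h1, h2]
  exact hagree _ hxn
end

section
/- Let G be a group with the unique root property. Let H1 be a subgroup of finite index in G, let H2 be a normal subgroup of finite index in G, and let φ1 : H1 → G and φ2 : H2 → G be injective homomorphisms whose images H1' = φ1(H1) and H2' = φ2(H2) have finite index in G. Suppose φ1(h) = φ2(h) for all h ∈ H1 ∩ H2. Then there exists an injective homomorphism φ : ⟨H1, H2⟩ → G with image ⟨H1', H2'⟩ such that φ(h) = φ1(h) for all h ∈ H1 and φ(h) = φ2(h) for all h ∈ H2. (Since H2 is normal, ⟨H1, H2⟩ = H1H2.) -/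
/-!
Since `H₂` is normal, every element of `H₁ ⊔ H₂` is a product `a * b` with `a ∈ H₁`, `b ∈ H₂`,
and one sets `φ (a * b) = φ₁ a * φ₂ b`; agreement on `H₁ ⊓ H₂` makes this well defined.
Multiplicativity amounts to `φ₂ (k⁻¹ * h * k) = (φ₁ k)⁻¹ * φ₂ h * φ₁ k` for `k ∈ H₁`, `h ∈ H₂`.
Both sides have the same `n`-th power as soon as `h ^ n ∈ H₁`, which holds for some `n > 0`
because `H₁` has finite index, so unique roots give equality. The same trick gives injectivity:
`φ₁ a = φ₂ b` forces `φ₁ (a ^ n) = φ₁ (b ^ n)` for `b ^ n ∈ H₁`, hence `a ^ n = b ^ n` and `a = b`.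
-/

open Function Subgroup

namespace MonoidHom

variable {G : Type*} [Group G] {H N : Subgroup G}

def EqOnInf (φ : H →* G) (ψ : N →* G) : Prop :=
  ∀ (x : G) (hH : x ∈ H) (hN : x ∈ N), φ ⟨x, hH⟩ = ψ ⟨x, hN⟩

namespace EqOnInf

variable {φ : H →* G} {ψ : N →* G}

theorem map_pow (h : EqOnInf φ ψ) {x : G} (hx : x ∈ N) {n : ℕ} (hxn : x ^ n ∈ H) :
    φ ⟨x ^ n, hxn⟩ = ψ ⟨x, hx⟩ ^ n := by
  rw [h _ hxn (pow_mem hx n), ← MonoidHom.map_pow]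
  rfl

theorem mul_eq_mul (h : EqOnInf φ ψ) {a a' : H} {b b' : N} (hab : (a : G) * b = a' * b') :
    φ a * ψ b = φ a' * ψ b' := by
  have hc : ((a'⁻¹ * a : H) : G) = (b' * b⁻¹ : N) := by
    simp only [coe_mul, coe_inv, eq_mul_inv_iff_mul_eq, mul_assoc, hab, inv_mul_cancel_left]
  have hφψ : φ (a'⁻¹ * a) = ψ (b' * b⁻¹) :=
    (h _ (a'⁻¹ * a).2 (by rw [hc]; exact (b' * b⁻¹).2)).trans (congrArg ψ (Subtype.ext hc))
  rw [map_mul, map_mul, map_inv, map_inv, inv_mul_eq_iff_eq_mul] at hφψ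
  rw [hφψ]
  group

theorem map_conj [IsMulTorsionFree G] [N.Normal] [H.IsFiniteRelIndex N] (h : EqOnInf φ ψ)
    (k : H) (x : N) :
    ψ ⟨(k : G)⁻¹ * x * k, Normal.conj_mem' ‹_› _ x.2 k⟩ = (φ k)⁻¹ * ψ x * φ k := by
  obtain ⟨n, hn, -, hxn⟩ := exists_pow_mem_of_relIndex_ne_zero (relIndex_ne_zero (H := H)) x.2
  refine IsMulTorsionFree.pow_left_injective hn.ne' ?_
  have hpow : ((k : G)⁻¹ * x * k) ^ n = (k : G)⁻¹ * x ^ n * k := by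
    simpa using conj_pow (a := (k : G)⁻¹) (b := (x : G)) (i := n)
  have hconj : ((k : G)⁻¹ * x * k) ^ n ∈ H :=
    hpow ▸ mul_mem (mul_mem (inv_mem k.2) hxn.1) k.2
  calc ψ ⟨(k : G)⁻¹ * x * k, _⟩ ^ n = φ ⟨(k⁻¹ * x * k : G) ^ n, hconj⟩ := (h.map_pow _ _).symm
    _ = φ (k⁻¹ * ⟨x ^ n, hxn.1⟩ * k) := by congr 1; ext; simp [hpow]
    _ = (φ k)⁻¹ * ψ x ^ n * φ k := by rw [map_mul, map_mul, map_inv, h.map_pow]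
    _ = ((φ k)⁻¹ * ψ x * φ k) ^ n := by simpa using (conj_pow (a := (φ k)⁻¹)).symm

theorem eq_of_map_eq [IsMulTorsionFree G] [H.IsFiniteRelIndex N] (h : EqOnInf φ ψ)
    (hφ : Injective φ) {a : H} {b : N} (hab : φ a = ψ b) : (a : G) = b := by
  obtain ⟨n, hn, -, hbn⟩ := exists_pow_mem_of_relIndex_ne_zero (relIndex_ne_zero (H := H)) b.2
  refine IsMulTorsionFree.pow_left_injective hn.ne' ?_
  have : φ (a ^ n) = φ ⟨(b : G) ^ n, hbn.1⟩ := by rw [MonoidHom.map_pow, hab, h.map_pow]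
  exact congrArg Subtype.val (hφ this)

end EqOnInf

variable [N.Normal]

theorem exists_mul_eq_of_mem_sup_of_normal (z : (H ⊔ N : Subgroup G)) :
    ∃ (a : H) (b : N), (a : G) * b = z := by
  obtain ⟨a, ha, b, hb, hab⟩ := mem_sup_of_normal_right.1 z.2
  exact ⟨⟨a, ha⟩, ⟨b, hb⟩, hab⟩

noncomputable def supLiftFun (φ : H →* G) (ψ : N →* G) (z : (H ⊔ N : Subgroup G)) : G :=
  φ (exists_mul_eq_of_mem_sup_of_normal z).choose *
    ψ (exists_mul_eq_of_mem_sup_of_normal z).choose_spec.choose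

variable {φ : H →* G} {ψ : N →* G}

theorem EqOnInf.supLiftFun_eq (h : EqOnInf φ ψ) {z : (H ⊔ N : Subgroup G)} {a : H} {b : N}
    (hab : (a : G) * b = z) : supLiftFun φ ψ z = φ a * ψ b :=
  h.mul_eq_mul <| (exists_mul_eq_of_mem_sup_of_normal z).choose_spec.choose_spec.trans hab.symm

variable [IsMulTorsionFree G] [H.IsFiniteRelIndex N]

noncomputable def supLift (h : EqOnInf φ ψ) : (H ⊔ N : Subgroup G) →* G where
  toFun := supLiftFun φ ψ
  map_one' := by rw [h.supLiftFun_eq (a := 1) (b := 1) (by simp), map_one, map_one, mul_one]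
  map_mul' z w := by
    obtain ⟨a, b, hz⟩ := exists_mul_eq_of_mem_sup_of_normal z
    obtain ⟨a', b', hw⟩ := exists_mul_eq_of_mem_sup_of_normal w
    let c : N := ⟨(a' : G)⁻¹ * b * a', Normal.conj_mem' ‹_› _ b.2 a'⟩
    have hzw : ((a * a' : H) : G) * (c * b' : N) = (z * w : (H ⊔ N : Subgroup G)) := by
      simp only [coe_mul, ← hz, ← hw, c]
      group
    rw [h.supLiftFun_eq hzw, h.supLiftFun_eq hz, h.supLiftFun_eq hw, map_mul, map_mul,
      h.map_conj a' b]
    group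

variable (h : EqOnInf φ ψ)

theorem supLift_apply {z : (H ⊔ N : Subgroup G)} {a : H} {b : N} (hab : (a : G) * b = z) :
    supLift h z = φ a * ψ b :=
  h.supLiftFun_eq hab

theorem supLift_apply_of_mem_left (x : G) (hx : x ∈ H) :
    supLift h ⟨x, mem_sup_left hx⟩ = φ ⟨x, hx⟩ := by
  rw [supLift_apply h (a := ⟨x, hx⟩) (b := 1) (mul_one x), map_one, mul_one]

theorem supLift_apply_of_mem_right (x : G) (hx : x ∈ N) :
    supLift h ⟨x, mem_sup_right hx⟩ = ψ ⟨x, hx⟩ := by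
  rw [supLift_apply h (a := 1) (b := ⟨x, hx⟩) (one_mul x), map_one, one_mul]

theorem supLift_injective (hφ : Injective φ) : Injective (supLift h) := by
  refine (injective_iff_map_eq_one _).2 fun z hz => ?_
  obtain ⟨a, b, hab⟩ := exists_mul_eq_of_mem_sup_of_normal z
  rw [supLift_apply h hab, mul_eq_one_iff_eq_inv, ← map_inv] at hz
  ext
  rw [← hab, h.eq_of_map_eq hφ hz, coe_inv, inv_mul_cancel, coe_one]

theorem range_supLift : (supLift h).range = φ.range ⊔ ψ.range := by
  refine le_antisymm ?_ (sup_le ?_ ?_)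
  · rintro _ ⟨z, rfl⟩
    obtain ⟨a, b, hab⟩ := exists_mul_eq_of_mem_sup_of_normal z
    rw [supLift_apply h hab]
    exact mul_mem_sup ⟨a, rfl⟩ ⟨b, rfl⟩
  · rintro _ ⟨a, rfl⟩
    exact ⟨_, supLift_apply_of_mem_left h a a.2⟩
  · rintro _ ⟨b, rfl⟩
    exact ⟨_, supLift_apply_of_mem_right h b b.2⟩

end MonoidHom

open MonoidHom

theorem stmt_4_general (G : Type*) [Group G]
    (hurp : ∀ (x y : G) (n : ℕ), 0 < n → x ^ n = y ^ n → x = y)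
    (H1 H2 : Subgroup G) (hH1 : H1.FiniteIndex)
    (hnorm : H2.Normal)
    (φ1 : H1 →* G) (φ2 : H2 →* G)
    (hinj1 : Function.Injective φ1)
    (hagree : ∀ (x : G) (hx1 : x ∈ H1) (hx2 : x ∈ H2), φ1 ⟨x, hx1⟩ = φ2 ⟨x, hx2⟩) :
    ∃ φ : (H1 ⊔ H2 : Subgroup G) →* G,
      Function.Injective φ ∧
      φ.range = φ1.range ⊔ φ2.range ∧
      (∀ (x : G) (hx : x ∈ H1), φ ⟨x, Subgroup.mem_sup_left hx⟩ = φ1 ⟨x, hx⟩) ∧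
      (∀ (x : G) (hx : x ∈ H2), φ ⟨x, Subgroup.mem_sup_right hx⟩ = φ2 ⟨x, hx⟩) := by
  have : IsMulTorsionFree G := ⟨fun n hn x y => hurp x y n (Nat.pos_of_ne_zero hn)⟩
  have : H1.IsFiniteRelIndex H2 := isFiniteRelIndex_of_finiteIndex
  exact ⟨supLift hagree, supLift_injective hagree hinj1, range_supLift hagree,
    supLift_apply_of_mem_left hagree, supLift_apply_of_mem_right hagree⟩

/-- Extension of two compatible isomorphisms between finite-index subgroups to an
isomorphism defined on the subgroup they generate, when one of them is normal. -/
theorem stmt_4 (G : Type*) [Group G]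
    (hurp : ∀ (x y : G) (n : ℕ), 0 < n → x ^ n = y ^ n → x = y)
    (H1 H2 : Subgroup G) (hH1 : H1.FiniteIndex) (hH2 : H2.FiniteIndex)
    (hnorm : H2.Normal)
    (φ1 : H1 →* G) (φ2 : H2 →* G)
    (hinj1 : Function.Injective φ1) (hinj2 : Function.Injective φ2)
    (hr1 : φ1.range.FiniteIndex) (hr2 : φ2.range.FiniteIndex)
    (hagree : ∀ (x : G) (hx1 : x ∈ H1) (hx2 : x ∈ H2), φ1 ⟨x, hx1⟩ = φ2 ⟨x, hx2⟩) :
    ∃ φ : (H1 ⊔ H2 : Subgroup G) →* G,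
      Function.Injective φ ∧
      φ.range = φ1.range ⊔ φ2.range ∧
      (∀ (x : G) (hx : x ∈ H1), φ ⟨x, Subgroup.mem_sup_left hx⟩ = φ1 ⟨x, hx⟩) ∧
      (∀ (x : G) (hx : x ∈ H2), φ ⟨x, Subgroup.mem_sup_right hx⟩ = φ2 ⟨x, hx⟩) :=
  stmt_4_general G hurp H1 H2 hH1 hnorm φ1 φ2 hinj1 hagree
end

section
/- Let G be a group with the unique root property, let H be a normal subgroup of finite index in G, and let β be an automorphism of H. Let A and B be subgroups of finite index in G and let α : A → G be an injective homomorphism with image B such that α(x) = β(x) for all x ∈ H ∩ A. If the index of A in G is coprime to the index of H in G, and the index of B in G is coprime to the index of H in G, then β extends to an automorphism ψ of G, i.e., there is an automorphism ψ of G with ψ(h) = β(h) for all h ∈ H. -/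
/-!
Coprimality of the indices forces `A ⊔ H = B ⊔ H = G`, so every element is a product `a * h`,
and the candidate extension is `a * h ↦ α a * β h`. It is well defined because `α` and `β`
agree on `A ⊓ H`, and multiplicative because `β (a h a⁻¹) = α a * β h * (α a)⁻¹`: both sides
have the same `m`-th power whenever `h ^ m ∈ A`, and roots are unique. Its image contains
`B` and `H`, hence is `G`; it is injective since `ψ x ^ n = β (x ^ n)` for `n = [G : H]`.
-/

def UniqueRoots (M : Type*) [Monoid M] : Prop :=
  ∀ x y : M, ∀ n : ℕ, 0 < n → x ^ n = y ^ n → x = y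

namespace Subgroup

variable {G : Type*} [Group G]

theorem sup_eq_top_of_coprime_index {K H : Subgroup G} (h : Nat.Coprime K.index H.index) :
    K ⊔ H = ⊤ :=
  index_eq_one.mp <| Nat.eq_one_of_dvd_coprimes h (index_dvd_of_le le_sup_left)
    (index_dvd_of_le le_sup_right)

theorem exists_mul_eq_of_sup_eq_top {K H : Subgroup G} [H.Normal] (h : K ⊔ H = ⊤) (g : G) :
    ∃ (k : K) (n : H), (k : G) * n = g := by
  obtain ⟨k, hk, n, hn, rfl⟩ := mem_sup_of_normal_right.mp (h ▸ mem_top g : g ∈ K ⊔ H)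
  exact ⟨⟨k, hk⟩, ⟨n, hn⟩, rfl⟩

end Subgroup

section Extension

variable {G M : Type*} [Group G] [Group M] {A H : Subgroup G} [H.Normal]

theorem exists_monoidHom_extend_of_sup_eq_top (hAH : A ⊔ H = ⊤) (α : A →* M) (φ : H →* M)
    (hagree : ∀ (a : A) (h : H), (a : G) = h → α a = φ h)
    (hconj : ∀ (a : A) (h : H), φ (MulAut.conjNormal (a : G) h) = α a * φ h * (α a)⁻¹) :
    ∃ F : G →* M, (∀ a : A, F a = α a) ∧ ∀ h : H, F h = φ h := by
  have hwellDefined : ∀ (a₁ a₂ : A) (h₁ h₂ : H), (a₁ : G) * h₁ = a₂ * h₂ →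
      α a₁ * φ h₁ = α a₂ * φ h₂ := by
    intro a₁ a₂ h₁ h₂ heq
    have := hagree (a₂⁻¹ * a₁) (h₂ * h₁⁻¹) (by
      simp only [Subgroup.coe_mul, Subgroup.coe_inv]
      rw [inv_mul_eq_iff_eq_mul, ← mul_assoc, ← heq]
      group)
    rw [map_mul, map_mul, map_inv, map_inv, inv_mul_eq_iff_eq_mul] at this
    rw [this]; group
  choose dA dH hd using Subgroup.exists_mul_eq_of_sup_eq_top hAH
  have hf : ∀ (g : G) (a : A) (h : H), (a : G) * h = g → α (dA g) * φ (dH g) = α a * φ h :=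
    fun g a h hg => hwellDefined _ _ _ _ ((hd g).trans hg.symm)
  refine ⟨MonoidHom.mk' (fun g => α (dA g) * φ (dH g)) fun g₁ g₂ => ?_, fun a => ?_,
    fun h => ?_⟩
  · set a₁ := dA g₁; set h₁ := dH g₁; set a₂ := dA g₂; set h₂ := dH g₂
    have hc := hconj a₂⁻¹ h₁
    rw [hf (g₁ * g₂) (a₁ * a₂) (MulAut.conjNormal ((a₂⁻¹ : A) : G) h₁ * h₂)]
    · rw [map_mul, map_mul, hc, map_inv]; group
    · rw [← hd g₁, ← hd g₂]
      simp only [Subgroup.coe_mul, MulAut.conjNormal_apply, Subgroup.coe_inv]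
      group
      rfl
  · simpa using hf a a 1 (by simp)
  · simpa using hf h 1 h (by simp)

end Extension

section RootUniqueness

variable {G M : Type*} [Group G] [Group M]

theorem map_conjNormal_of_uniqueRoots {A H : Subgroup G} [H.Normal] [A.FiniteIndex]
    (hM : UniqueRoots M) (α : A →* M) (φ : H →* M)
    (hagree : ∀ (a : A) (h : H), (a : G) = h → α a = φ h) (a : A) (h : H) :
    φ (MulAut.conjNormal (a : G) h) = α a * φ h * (α a)⁻¹ := by
  obtain ⟨m, hm, -, hmA⟩ := Subgroup.exists_pow_mem_of_index_ne_zero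
    (Subgroup.FiniteIndex.index_ne_zero (H := A)) (h : G)
  have hpow : α ⟨_, hmA⟩ = φ h ^ m := by rw [hagree _ (h ^ m) (by simp), map_pow]
  refine hM _ _ m hm ?_
  rw [← map_pow, ← map_pow, ← hagree (a * ⟨_, hmA⟩ * a⁻¹) _ (by simp [conj_pow]), map_mul,
    map_mul, map_inv, hpow, conj_pow]

theorem MonoidHom.injective_of_injOn (hG : UniqueRoots G) {H : Subgroup G} [H.Normal]
    [H.FiniteIndex] (F : G →* M) (hF : Set.InjOn F H) : Function.Injective F :=
  fun x y hxy => hG x y H.index (Nat.pos_of_ne_zero Subgroup.FiniteIndex.index_ne_zero) <|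
    hF (H.pow_index_mem x) (H.pow_index_mem y) (by rw [map_pow, map_pow, hxy])

end RootUniqueness

theorem stmt_5_general (G : Type*) [Group G]
    (hurp : ∀ (x y : G) (n : ℕ), 0 < n → x ^ n = y ^ n → x = y)
    (H : Subgroup G) (hnorm : H.Normal) (hH : H.FiniteIndex)
    (β : H ≃* H)
    (A B : Subgroup G) (hA : A.FiniteIndex)
    (α : A →* G) (hrange : α.range = B)
    (hagree : ∀ (x : G) (hxH : x ∈ H) (hxA : x ∈ A),
      α ⟨x, hxA⟩ = (β ⟨x, hxH⟩ : G))
    (hcopA : Nat.Coprime A.index H.index)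
    (hcopB : Nat.Coprime B.index H.index) :
    ∃ ψ : G ≃* G, ∀ (h : G) (hh : h ∈ H), ψ h = (β ⟨h, hh⟩ : G) := by
  let φ : H →* G := H.subtype.comp β.toMonoidHom
  have hαφ : ∀ (a : A) (h : H), (a : G) = h → α a = φ h := by
    rintro ⟨a, ha⟩ ⟨h, hh⟩ (rfl : a = h)
    exact hagree a hh ha
  obtain ⟨F, hFA, hFH⟩ := exists_monoidHom_extend_of_sup_eq_top
    (Subgroup.sup_eq_top_of_coprime_index hcopA) α φ hαφ
    (map_conjNormal_of_uniqueRoots hurp α φ hαφ)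
  have hFinj : Function.Injective F := F.injective_of_injOn hurp fun x hx y hy hxy =>
    congrArg Subtype.val <| β.injective <| Subtype.ext <| (hFH ⟨x, hx⟩).symm.trans <|
      hxy.trans (hFH ⟨y, hy⟩)
  have hFrange : F.range = ⊤ := by
    refine top_le_iff.mp <| Subgroup.sup_eq_top_of_coprime_index hcopB ▸ sup_le ?_ ?_
    · rw [← hrange]
      rintro _ ⟨a, rfl⟩
      exact ⟨a, hFA a⟩
    · intro h hh
      exact ⟨β.symm ⟨h, hh⟩, by simp [hFH, φ]⟩
  exact ⟨MulEquiv.ofBijective F ⟨hFinj, MonoidHom.range_eq_top.mp hFrange⟩,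
    fun h hh => hFH ⟨h, hh⟩⟩

/-- If `G` has the unique root property, `H` is a normal subgroup of finite index, `β` an
automorphism of `H`, and `β` agrees with an isomorphism `α : A → B` between finite-index
subgroups whose indices are coprime to the index of `H`, then `β` extends to an
automorphism of `G`. -/
theorem stmt_5 (G : Type*) [Group G]
    (hurp : ∀ (x y : G) (n : ℕ), 0 < n → x ^ n = y ^ n → x = y)
    (H : Subgroup G) (hnorm : H.Normal) (hH : H.FiniteIndex)
    (β : H ≃* H)
    (A B : Subgroup G) (hA : A.FiniteIndex) (hB : B.FiniteIndex)
    (α : A →* G) (hinj : Function.Injective α) (hrange : α.range = B)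
    (hagree : ∀ (x : G) (hxH : x ∈ H) (hxA : x ∈ A),
      α ⟨x, hxA⟩ = (β ⟨x, hxH⟩ : G))
    (hcopA : Nat.Coprime A.index H.index)
    (hcopB : Nat.Coprime B.index H.index) :
    ∃ ψ : G ≃* G, ∀ (h : G) (hh : h ∈ H), ψ h = (β ⟨h, hh⟩ : G) :=
  stmt_5_general G hurp H hnorm hH β A B hA α hrange hagree hcopA hcopB
end

section
/- Let l and r be nonzero coprime integers and let n ≥ 3 be an integer. If l^{n-1} + r·l^{n-2} + ⋯ + r^{n-1} = ∑_{i=0}^{n-1} l^{n-1-i} r^{i} equals 1 or −1, then (l, r) = (1, −1) or (l, r) = (−1, 1). -/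
open Finset in
lemma key_abs (l r : ℤ) (h2 : 2 ≤ |l|) (hba : |r| < |l|) (hb : 1 ≤ |r|)
    (n : ℕ) (hn : 3 ≤ n) :
    1 < |∑ i ∈ Finset.range n, l ^ (n - 1 - i) * r ^ i| := by
  have hid : (∑ i ∈ Finset.range n, l ^ (n - 1 - i) * r ^ i) * (r - l) = r ^ n - l ^ n := by
    have := geom_sum₂_mul r l n
    rw [← this]
    congr 1
    exact Finset.sum_congr rfl (fun i _ => mul_comm _ _)
  set S := ∑ i ∈ Finset.range n, l ^ (n - 1 - i) * r ^ i with hS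
  by_contra hcon
  push_neg at hcon
  have habs : |S| * |r - l| = |r ^ n - l ^ n| := by rw [← abs_mul, hid]
  have h1 : |l ^ n| - |r ^ n| ≤ |r ^ n - l ^ n| := by
    rw [abs_sub_comm]; exact abs_sub_abs_le_abs_sub _ _
  rw [abs_pow, abs_pow] at h1
  have hrl : |r - l| ≤ |r| + |l| := abs_sub _ _
  have hrlpos : 0 < |r - l| := by
    rw [abs_pos]
    intro h
    have : r = l := by linarith [sub_eq_zero.mp h]
    rw [this] at hba; exact lt_irrefl _ hba
  -- |r|^n ≤ |r| * |l|^(n-1)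
  have hn1 : n = (n - 1) + 1 := by omega
  have hbn : |r| ^ n ≤ |r| * |l| ^ (n - 1) := by
    rw [hn1, pow_succ']
    exact mul_le_mul_of_nonneg_left (pow_le_pow_left₀ (abs_nonneg _) hba.le _) (abs_nonneg _)
  have hln : |l| ^ n = |l| * |l| ^ (n - 1) := by
    nth_rewrite 1 [hn1]
    rw [pow_succ']
  have hA2 : |l| ^ 2 ≤ |l| ^ (n - 1) := pow_le_pow_right₀ (by linarith) (by omega)
  have hSle : |S| * |r - l| ≤ |r - l| := by
    calc |S| * |r - l| ≤ 1 * |r - l| :=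
      mul_le_mul_of_nonneg_right hcon (abs_nonneg _)
    _ = |r - l| := one_mul _
  nlinarith [pow_nonneg (abs_nonneg l) (n-1), sq_nonneg (|l| - 1)]


open Finset in
/-- If `l` and `r` are nonzero coprime integers, `n ≥ 3`, and
`l^(n-1) + r l^(n-2) + ⋯ + r^(n-1) = ±1`, then `(l, r) = (1, -1)` or `(l, r) = (-1, 1)`. -/
theorem stmt_8 (l r : ℤ) (hl : l ≠ 0) (hr : r ≠ 0) (hco : Int.gcd l r = 1)
    (n : ℕ) (hn : 3 ≤ n)
    (hsum : (∑ i ∈ Finset.range n, l ^ (n - 1 - i) * r ^ i) = 1 ∨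
      (∑ i ∈ Finset.range n, l ^ (n - 1 - i) * r ^ i) = -1) :
    (l = 1 ∧ r = -1) ∨ (l = -1 ∧ r = 1) := by
  have hSabs : |∑ i ∈ Finset.range n, l ^ (n - 1 - i) * r ^ i| = 1 := by
    rcases hsum with h | h <;> rw [h] <;> norm_num
  have hl1 : 1 ≤ |l| := by rwa [← abs_pos] at hl;
  have hr1 : 1 ≤ |r| := by rwa [← abs_pos] at hr
  -- case split on sizes
  by_cases hll : |l| ≤ 1
  · by_cases hrr : |r| ≤ 1
    · -- both units
      have hl' : l = 1 ∨ l = -1 := by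
        rcases abs_le.mp hll with ⟨h1, h2⟩; omega
      have hr' : r = 1 ∨ r = -1 := by
        rcases abs_le.mp hrr with ⟨h1, h2⟩; omega
      rcases hl' with rfl | rfl <;> rcases hr' with rfl | rfl
      · exfalso
        have : (∑ i ∈ Finset.range n, (1:ℤ) ^ (n - 1 - i) * 1 ^ i) = n := by simp
        rw [this] at hsum
        rcases hsum with h | h <;> omega
      · left; exact ⟨rfl, rfl⟩
      · right; exact ⟨rfl, rfl⟩
      · exfalso
        have : (∑ i ∈ Finset.range n, (-1:ℤ) ^ (n - 1 - i) * (-1) ^ i)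
            = n * (-1) ^ (n - 1) := by
          rw [Finset.sum_congr rfl (fun i hi => ?_), Finset.sum_const, Finset.card_range,
            nsmul_eq_mul]
          rw [← pow_add]
          congr 1
          have := Finset.mem_range.mp hi
          omega
        rw [this] at hsum
        rcases neg_one_pow_eq_or ℤ (n - 1) with h | h <;> rw [h] at hsum <;>
          rcases hsum with h' | h' <;> omega
    · -- |r| ≥ 2 > |l| : use reflected sum
      push_neg at hrr
      exfalso
      have hrefl : (∑ i ∈ Finset.range n, l ^ (n - 1 - i) * r ^ i)
          = ∑ i ∈ Finset.range n, r ^ (n - 1 - i) * l ^ i := by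
        rw [← Finset.sum_range_reflect]
        refine Finset.sum_congr rfl (fun i hi => ?_)
        have := Finset.mem_range.mp hi
        rw [mul_comm]
        congr 2
        omega
      rw [hrefl] at hSabs
      have := key_abs r l hrr (by linarith) hl1 n hn
      omega
  · push_neg at hll
    by_cases hba : |r| < |l|
    · exfalso
      have := key_abs l r hll hba hr1 n hn
      omega
    · push_neg at hba
      -- |l| ≤ |r|; if |r| = |l| then gcd = |l| ≥ 2 contradiction; else |l| < |r|
      rcases lt_or_eq_of_le hba with hba' | hba'
      · exfalso
        have hrefl : (∑ i ∈ Finset.range n, l ^ (n - 1 - i) * r ^ i)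
            = ∑ i ∈ Finset.range n, r ^ (n - 1 - i) * l ^ i := by
          rw [← Finset.sum_range_reflect]
          refine Finset.sum_congr rfl (fun i hi => ?_)
          have := Finset.mem_range.mp hi
          rw [mul_comm]
          congr 2
          omega
        rw [hrefl] at hSabs
        have := key_abs r l (by linarith) hba' hl1 n hn
        omega
      · exfalso
        -- |l| = |r|, gcd = natAbs stuff
        have hn' : l.natAbs = r.natAbs := by
          have h1 := Int.abs_eq_natAbs l
          have h2 := Int.abs_eq_natAbs r
          omega
        have hg : Int.gcd l r = l.natAbs := by
          rw [Int.gcd, hn', Nat.gcd_self]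
        have := Int.abs_eq_natAbs l
        omega
end

section
/- Let G2 be a group and let C be an infinite cyclic subgroup of G2. If G2 is abelian, assume moreover that G2 is the internal direct sum K ⊕ L of two subgroups with C ≤ K and |L| > 2. Then there exists an automorphism ψ of G2 with ψ ≠ id such that ψ(c) = c for all c ∈ C. -/
/-!
If `G` is nonabelian, conjugation by a non-central element commuting with the generator `c` of
`C` does the job: `c` itself if `c` is not central, any non-central element otherwise.
If `G = K × L` is abelian, extend a nontrivial automorphism of `L` by the identity on `K ⊇ C`.
Such an automorphism exists as soon as `|L| > 2`: inversion if `L` has an element of order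
greater than 2; otherwise `L` is a vector space over `𝔽₂` of dimension at least 2, and swapping
two basis vectors works.
-/

open Cardinal

universe u v

theorem Module.lift_mk_le_lift_mk_of_rank_le_one {K : Type u} {V : Type v} [DivisionRing K]
    [AddCommGroup V] [Module K V] (h : Module.rank K V ≤ 1) : lift.{u} #V ≤ lift.{v} #K := by
  obtain ⟨v₀, hv₀⟩ := rank_le_one_iff.1 h
  exact lift_mk_le_lift_mk_of_surjective (f := fun r : K => r • v₀) hv₀

theorem Module.exists_linearEquiv_ne_refl_of_one_lt_rank {K V : Type*} [DivisionRing K]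
    [AddCommGroup V] [Module K V] (h : 1 < Module.rank K V) :
    ∃ f : V ≃ₗ[K] V, f ≠ LinearEquiv.refl K V := by
  classical
  let b := Module.Basis.ofVectorSpace K V
  rw [← b.mk_eq_rank'', Cardinal.one_lt_iff_nontrivial] at h
  obtain ⟨i, j, hij⟩ := h.exists_pair_ne
  refine ⟨b.equiv b (Equiv.swap i j), fun hf => hij (b.injective ?_).symm⟩
  simpa using LinearEquiv.congr_fun hf (b i)

theorem exists_mulEquiv_ne_refl_of_mul_self_eq_one {H : Type*} [CommGroup H]
    (hH : ∀ x : H, x * x = 1) (hcard : 2 < #H) : ∃ φ : H ≃* H, φ ≠ MulEquiv.refl H := by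
  let : Module (ZMod 2) (Additive H) := AddCommGroup.zmodModule fun x => by
    rw [two_nsmul]; exact hH x.toMul
  have hrank : 1 < Module.rank (ZMod 2) (Additive H) := by
    by_contra! hle
    exact hcard.not_ge (by simpa using Module.lift_mk_le_lift_mk_of_rank_le_one hle)
  obtain ⟨f, hf⟩ := Module.exists_linearEquiv_ne_refl_of_one_lt_rank hrank
  refine ⟨MulEquiv.toAdditive.symm f.toAddEquiv, fun hφ => hf ?_⟩
  ext x
  simpa using congrArg Additive.ofMul (DFunLike.congr_fun hφ x.toMul)

theorem exists_mulEquiv_ne_refl_of_two_lt_mk {H : Type*} [CommGroup H] (hcard : 2 < #H) :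
    ∃ φ : H ≃* H, φ ≠ MulEquiv.refl H := by
  by_cases hH : ∀ x : H, x * x = 1
  · exact exists_mulEquiv_ne_refl_of_mul_self_eq_one hH hcard
  · push Not at hH
    obtain ⟨x, hx⟩ := hH
    refine ⟨MulEquiv.inv H, fun hinv => hx ?_⟩
    have : x⁻¹ = x := DFunLike.congr_fun hinv x
    simpa [this] using mul_inv_cancel x

namespace Subgroup

variable {G : Type*} [Group G] (K L : Subgroup G)

noncomputable def prodMulEquivOfCommute (hcomm : ∀ k ∈ K, ∀ l ∈ L, Commute k l)
    (hinf : K ⊓ L = ⊥) (hsup : K ⊔ L = ⊤) : K × L ≃* G :=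
  MulEquiv.ofBijective (K.subtype.noncommCoprod L.subtype fun k l => hcomm k k.2 l l.2)
    ⟨(MonoidHom.noncommCoprod_injective _ _ _).2
      ⟨K.subtype_injective, L.subtype_injective, by simpa [disjoint_iff] using hinf⟩,
    MonoidHom.range_eq_top.1 <| (MonoidHom.noncommCoprod_range _ _ _).trans <| by
      rw [K.range_subtype, L.range_subtype, hsup]⟩

@[simp]
theorem prodMulEquivOfCommute_apply (hcomm : ∀ k ∈ K, ∀ l ∈ L, Commute k l)
    (hinf : K ⊓ L = ⊥) (hsup : K ⊔ L = ⊤) (p : K × L) :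
    prodMulEquivOfCommute K L hcomm hinf hsup p = p.1 * p.2 := rfl

theorem exists_mulEquiv_ne_refl_fixing_of_prod (hcomm : ∀ k ∈ K, ∀ l ∈ L, Commute k l)
    (hinf : K ⊓ L = ⊥) (hsup : K ⊔ L = ⊤) {φ : L ≃* L} (hφ : φ ≠ MulEquiv.refl L) :
    ∃ ψ : G ≃* G, ψ ≠ MulEquiv.refl G ∧ ∀ k ∈ K, ψ k = k := by
  set e := prodMulEquivOfCommute K L hcomm hinf hsup
  have he (p : K × L) : e p = p.1 * p.2 := prodMulEquivOfCommute_apply K L hcomm hinf hsup p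
  set θ := (MulEquiv.refl K).prodCongr φ
  have hθ (p : K × L) : θ p = (p.1, φ p.2) := rfl
  refine ⟨(e.symm.trans θ).trans e, fun hψ => hφ ?_, fun k hk => ?_⟩
  · ext l
    have h := DFunLike.congr_fun hψ (e (1, l))
    rw [MulEquiv.trans_apply, MulEquiv.trans_apply, e.symm_apply_apply, hθ, he, he] at h
    simpa using h
  · have hk' : e.symm k = (⟨k, hk⟩, 1) := e.symm_apply_eq.2 (by simp [he])
    simp [hk', hθ, he]

end Subgroup

theorem exists_notMem_center_commute {G : Type*} [Group G] (hG : ∃ a b : G, a * b ≠ b * a)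
    (g : G) : ∃ x ∉ Subgroup.center G, Commute x g := by
  by_cases hg : g ∈ Subgroup.center G
  · obtain ⟨a, b, hab⟩ := hG
    exact ⟨a, fun ha => hab (Subgroup.mem_center_iff.1 ha b).symm,
      Subgroup.mem_center_iff.1 hg a⟩
  · exact ⟨g, hg, Commute.refl g⟩

theorem MulAut.conj_ne_refl_of_notMem_center {G : Type*} [Group G] {x : G}
    (hx : x ∉ Subgroup.center G) : MulAut.conj x ≠ MulEquiv.refl G := by
  refine fun h => hx (Subgroup.mem_center_iff.2 fun y => ?_)
  have : x * y * x⁻¹ = y := DFunLike.congr_fun h y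
  exact (mul_inv_eq_iff_eq_mul.1 this).symm

/-- Let `C` be an infinite cyclic subgroup of `G2`; if `G2` is abelian, assume moreover that
`G2 = K ⊕ L` (internal direct sum) with `C ≤ K` and `|L| > 2`. Then `G2` has a nontrivial
automorphism fixing `C` pointwise. -/
theorem stmt_9 (G2 : Type*) [Group G2] (C : Subgroup G2)
    (hC : ∃ c : G2, ¬IsOfFinOrder c ∧ C = Subgroup.zpowers c)
    (habel : (∀ a b : G2, a * b = b * a) →
      ∃ K L : Subgroup G2,
        (∀ k ∈ K, ∀ l ∈ L, k * l = l * k) ∧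
        K ⊓ L = ⊥ ∧ K ⊔ L = ⊤ ∧ C ≤ K ∧ (2 : Cardinal) < Cardinal.mk L) :
    ∃ ψ : G2 ≃* G2, ψ ≠ MulEquiv.refl G2 ∧ ∀ c ∈ C, ψ c = c := by
  by_cases hcomm : ∀ a b : G2, a * b = b * a
  · obtain ⟨K, L, hKL, hinf, hsup, hCK, hcard⟩ := habel hcomm
    let : CommGroup L := { mul_comm a b := Subtype.ext (hcomm a b) }
    obtain ⟨φ, hφ⟩ := exists_mulEquiv_ne_refl_of_two_lt_mk hcard
    obtain ⟨ψ, hψ, hψK⟩ := K.exists_mulEquiv_ne_refl_fixing_of_prod L hKL hinf hsup hφ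
    exact ⟨ψ, hψ, fun c hc => hψK c (hCK hc)⟩
  · push Not at hcomm
    obtain ⟨c, -, rfl⟩ := hC
    obtain ⟨x, hx, hxc⟩ := exists_notMem_center_commute hcomm c
    refine ⟨MulAut.conj x, MulAut.conj_ne_refl_of_notMem_center hx, ?_⟩
    rintro _ ⟨k, rfl⟩
    exact (hxc.zpow_right k).mul_inv_cancel
end

section
/- Let X be a type, let F be the free group on X, let x ∈ X, and let p ≥ 2 be an integer. Then x^p is not primitive in F: there is no free generating set (free group basis) of F containing the element x^p. -/
/-- In the free group `F` on `X`, for `x ∈ X` and `p ≥ 2`, the element `x^p` is not primitive: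
no free group basis of `F` contains `x^p` in its range. -/
theorem stmt_12 (X : Type u) (x : X) (p : ℕ) (hp : 2 ≤ p) :
    ¬∃ (ι : Type u) (b : FreeGroupBasis ι (FreeGroup X)),
      FreeGroup.of x ^ p ∈ Set.range b := by
  rintro ⟨ι, b, i, hi⟩
  haveI : Fact (1 < p) := ⟨hp⟩
  classical
  -- map to Multiplicative (ZMod p) sending basis element i to 1, all others to 0
  set f : ι → Multiplicative (ZMod p) := fun j => if j = i then Multiplicative.ofAdd 1 else 1
  set φ : FreeGroup X →* Multiplicative (ZMod p) := b.lift f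
  have h1 : φ (b i) = Multiplicative.ofAdd 1 := by
    simp [φ, FreeGroupBasis.lift_apply_apply, f]
  have h2 : φ (FreeGroup.of x ^ p) = 1 := by
    rw [map_pow]
    have : ∀ g : Multiplicative (ZMod p), g ^ p = 1 := by
      intro g
      rw [← ofAdd_toAdd g, ← ofAdd_nsmul]
      simp [nsmul_eq_mul, ZMod.natCast_self]
    exact this _
  rw [hi, h2] at h1
  have : (1 : ZMod p) = 0 := by
    simpa using h1.symm
  exact one_ne_zero this
end

section
/- Let G be a group that is generated by two elements, simple, complete (i.e., G has trivial center and every automorphism of G is inner), torsion-free, and in which every nontrivial proper subgroup is infinite cyclic. Then every maximal cyclic subgroup of G is malnormal. -/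
/-- A group is Obraztsov if it is 2-generated, simple, complete (trivial center and all
automorphisms inner), torsion-free, and every nontrivial proper subgroup is infinite cyclic. -/
def IsObraztsov (G : Type*) [Group G] : Prop :=
  (∃ a b : G, Subgroup.closure {a, b} = ⊤) ∧
  IsSimpleGroup G ∧
  Subgroup.center G = ⊥ ∧
  (∀ φ : G ≃* G, ∃ g : G, ∀ y : G, φ y = g * y * g⁻¹) ∧
  (∀ g : G, g ≠ 1 → ¬IsOfFinOrder g) ∧
  (∀ K : Subgroup G, K ≠ ⊥ → K ≠ ⊤ → IsCyclic K ∧ Infinite K)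

/-!
Since every proper subgroup is cyclic, a maximal cyclic subgroup `C = ⟨z⟩` is a maximal proper
subgroup. The centralizer of any `x ≠ 1` in `C` contains `C` and is proper (the center is
trivial), so it equals `C`. If `y ≠ 1` and `g y g⁻¹` both lie in `C`, conjugation by `g` carries
`C = C_G(y)` onto `C_G(g y g⁻¹) = C`, so `g` normalizes `C`. As `G` is simple, `C` is not normal,
so its normalizer is proper and hence equals `C`; thus `g ∈ C`.
-/

open Subgroup

theorem Subgroup.mem_centralizer_singleton_conj_iff {G : Type*} [Group G] (g y h : G) :
    g * h * g⁻¹ ∈ centralizer {g * y * g⁻¹} ↔ h ∈ centralizer {y} := by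
  simp only [mem_centralizer_singleton_iff]
  exact Commute.conj_iff g

theorem IsSimpleGroup.normalizer_ne_top {G : Type*} [Group G] [IsSimpleGroup G]
    {H : Subgroup G} (hbot : H ≠ ⊥) (htop : H ≠ ⊤) : normalizer (H : Set G) ≠ ⊤ := fun h =>
  (IsSimpleGroup.eq_bot_or_eq_top_of_normal H (normalizer_eq_top_iff.mp h)).elim hbot htop

section MaximalCyclic

variable {G : Type*} [Group G] {z : G}

theorem eq_zpowers_of_zpowers_le (hcyc : ∀ K : Subgroup G, K ≠ ⊥ → K ≠ ⊤ → IsCyclic K)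
    (hz : ∀ w : G, zpowers z ≤ zpowers w → zpowers z = zpowers w)
    {K : Subgroup G} (hle : zpowers z ≤ K) (htop : K ≠ ⊤) : K = zpowers z := by
  by_cases hbot : K = ⊥
  · exact le_antisymm (hbot ▸ bot_le) hle
  obtain ⟨w, rfl⟩ := K.isCyclic_iff_exists_zpowers_eq_top.mp (hcyc K hbot htop)
  exact (hz w hle).symm

theorem centralizer_eq_zpowers (hcyc : ∀ K : Subgroup G, K ≠ ⊥ → K ≠ ⊤ → IsCyclic K)
    (hz : ∀ w : G, zpowers z ≤ zpowers w → zpowers z = zpowers w) (hcenter : center G = ⊥)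
    {x : G} (hx : x ∈ zpowers z) (hx1 : x ≠ 1) : centralizer {x} = zpowers z := by
  refine eq_zpowers_of_zpowers_le hcyc hz ?_ fun htop => hx1 ?_
  · obtain ⟨n, rfl⟩ := hx
    rw [zpowers_le, mem_centralizer_singleton_iff]
    exact ((Commute.refl z).zpow_right n).eq
  · rw [← mem_bot, ← hcenter]
    exact centralizer_eq_top_iff_subset.mp htop rfl

end MaximalCyclic

/-- In an Obraztsov group, every maximal cyclic subgroup is malnormal. -/
theorem stmt_14 (G : Type*) [Group G] (hG : IsObraztsov G) :
    ∀ z : G,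
      (∀ w : G, Subgroup.zpowers z ≤ Subgroup.zpowers w →
        Subgroup.zpowers z = Subgroup.zpowers w) →
      ∀ g : G, g ∉ Subgroup.zpowers z →
        ∀ y : G, y ∈ Subgroup.zpowers z → g * y * g⁻¹ ∈ Subgroup.zpowers z → y = 1 := by
  obtain ⟨-, hsimple, hcenter, -, -, hsub⟩ := hG
  have hcyc K hbot htop := (hsub K hbot htop).1
  intro z hz g hg y hy hconj
  by_contra hy1
  have hC : centralizer {y} = zpowers z := centralizer_eq_zpowers hcyc hz hcenter hy hy1
  have hC' : centralizer {g * y * g⁻¹} = zpowers z :=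
    centralizer_eq_zpowers hcyc hz hcenter hconj (conj_eq_one_iff.not.mpr hy1)
  have hgN : g ∈ normalizer (zpowers z : Set G) := mem_normalizer_iff.mpr fun h => by
    simpa only [hC, hC', SetLike.mem_coe] using (mem_centralizer_singleton_conj_iff g y h).symm
  have hN : normalizer (zpowers z : Set G) = zpowers z :=
    eq_zpowers_of_zpowers_le hcyc hz le_normalizer <|
      hsimple.normalizer_ne_top (fun h => hy1 (mem_bot.mp (h ▸ hy))) fun h => hg (h ▸ mem_top g)
  exact hg (hN ▸ hgN)
end

section
/- Let G be a group that is generated by two elements, simple, complete (i.e., G has trivial center and every automorphism of G is inner), torsion-free, and in which every nontrivial proper subgroup is infinite cyclic. Then G has the unique root property: for all x, y ∈ G and every positive integer n, x^n = y^n implies x = y. -/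
/-- An Obraztsov group has the unique root property. -/
theorem stmt_15 (G : Type*) [Group G] (hG : IsObraztsov G) :
    ∀ (x y : G) (n : ℕ), 0 < n → x ^ n = y ^ n → x = y := by
  obtain ⟨-, -, hcenter, -, htf, hsub⟩ := hG
  -- torsion-free: pow eq one implies one
  have hpow1 : ∀ (w : G) (n : ℕ), 0 < n → w ^ n = 1 → w = 1 := by
    intro w n hn hw
    by_contra h1
    exact htf w h1 (isOfFinOrder_iff_pow_eq_one.mpr ⟨n, hn, hw⟩)
  intro x y n hn hxy
  by_cases hx1 : x = 1
  · subst hx1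
    simp only [one_pow] at hxy
    exact (hpow1 y n hn hxy.symm).symm
  -- x ≠ 1, so z := x^n ≠ 1
  set z := x ^ n with hz
  have hz1 : z ≠ 1 := fun h => hx1 (hpow1 x n hn h)
  set C := Subgroup.centralizer ({z} : Set G) with hC
  have hzC : z ∈ C := Subgroup.mem_centralizer_iff.mpr (by
    rintro g rfl; rfl)
  have hxC : x ∈ C := Subgroup.mem_centralizer_iff.mpr (by
    rintro g rfl; exact ((Commute.self_pow x n).symm).eq)
  have hyC : y ∈ C := Subgroup.mem_centralizer_iff.mpr (by
    rintro g rfl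
    have : z = y ^ n := hxy
    rw [this]
    exact ((Commute.self_pow y n).symm).eq)
  have hCbot : C ≠ ⊥ := by
    intro h
    rw [h, Subgroup.mem_bot] at hzC
    exact hz1 hzC
  have hCtop : C ≠ ⊤ := by
    intro h
    have : z ∈ Subgroup.center G := Subgroup.mem_center_iff.mpr (by
      intro g
      have hg : g ∈ C := by rw [h]; trivial
      exact (Subgroup.mem_centralizer_iff.mp hg z rfl).symm)
    rw [hcenter, Subgroup.mem_bot] at this
    exact hz1 this
  obtain ⟨hcyc, -⟩ := hsub C hCbot hCtop
  haveI := hcyc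
  obtain ⟨g, hg⟩ := IsCyclic.exists_generator (α := C)
  have hg1 : (g : G) ≠ 1 := by
    intro h
    obtain ⟨m, hm⟩ := hg ⟨z, hzC⟩
    apply hz1
    have := congrArg (Subtype.val) hm
    simp only [SubgroupClass.coe_zpow, h, one_zpow] at this
    exact this.symm
  have hginf : ¬IsOfFinOrder (g : G) := htf _ hg1
  have hinj : Function.Injective (fun k : ℤ => (g : G) ^ k) :=
    injective_zpow_iff_not_isOfFinOrder.mpr hginf
  obtain ⟨a, ha⟩ := hg ⟨x, hxC⟩
  obtain ⟨b, hb⟩ := hg ⟨y, hyC⟩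
  have hax : x = (g : G) ^ a := by
    have := congrArg (Subtype.val) ha
    simpa [SubgroupClass.coe_zpow] using this.symm
  have hby : y = (g : G) ^ b := by
    have := congrArg (Subtype.val) hb
    simpa [SubgroupClass.coe_zpow] using this.symm
  have hxyn : x ^ n = y ^ n := hz.symm.trans hxy
  have key : (fun k : ℤ => (g : G) ^ k) (a * n) = (fun k : ℤ => (g : G) ^ k) (b * n) := by
    simp only [zpow_mul, zpow_natCast, ← hax, ← hby]
    exact hxyn
  have := hinj key
  have hn' : (n : ℤ) ≠ 0 := by exact_mod_cast hn.ne'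
  have hab : a = b := mul_right_cancel₀ hn' this
  rw [hax, hby, hab]
end

section
/- Let G be the amalgamated product defined in the context. Then the abelianization G/[G,G] is infinite cyclic, and the element u does not lie in the commutator subgroup [G,G]. -/
/-- `h` generates a maximal cyclic subgroup. -/
def IsMaxCyclicGen {H : Type*} [Group H] (h : H) : Prop :=
  ∀ w : H, Subgroup.zpowers h ≤ Subgroup.zpowers w →
    Subgroup.zpowers h = Subgroup.zpowers w

/-- `u i = (h i, 1) ∈ H i × ℤ`. -/
def amalgU {H : Bool → Type*} [∀ i, Group (H i)] (h : ∀ i, H i) (i : Bool) :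
    H i × Multiplicative ℤ :=
  (h i, Multiplicative.ofAdd (1 : ℤ))

/-- The homomorphism `ℤ → H i × ℤ` sending `1 ↦ u i`. -/
def amalgMap {H : Bool → Type*} [∀ i, Group (H i)] (h : ∀ i, H i) (i : Bool) :
    Multiplicative ℤ →* H i × Multiplicative ℤ :=
  zpowersHom _ (amalgU h i)

/-- The amalgamated free product `G = (H₁ × ℤ) ∗_{u₁ = u₂} (H₂ × ℤ)`. -/
abbrev Amalg (H : Bool → Type*) [∀ i, Group (H i)] (h : ∀ i, H i) : Type _ :=
  Monoid.PushoutI (amalgMap h)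

theorem IsSimpleGroup.commutator_eq_top_of_center_eq_bot {G : Type*} [Group G] [IsSimpleGroup G]
    (hc : Subgroup.center G = ⊥) : commutator G = ⊤ :=
  (Subgroup.Normal.eq_bot_or_eq_top (inferInstance : (commutator G).Normal)).resolve_left
    fun hbot => bot_ne_top (hc ▸ (commutator_eq_bot_iff_center_eq_top G).mp hbot)

theorem IsObraztsov.commutator_eq_top {G : Type*} [Group G] (hG : IsObraztsov G) :
    commutator G = ⊤ :=
  have := hG.2.1
  IsSimpleGroup.commutator_eq_top_of_center_eq_bot hG.2.2.1

theorem MonoidHom.eq_one_of_commutator_eq_top {G A : Type*} [Group G] [CommGroup A]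
    (hG : commutator G = ⊤) (f : G →* A) (g : G) : f g = 1 :=
  Abelianization.commutator_subset_ker f (hG ▸ Subgroup.mem_top g)

/-- `(a, n) = (a x⁻ⁿ, 0) · (x, 1)ⁿ`, and the first factor dies in every abelian quotient. -/
theorem MonoidHom.map_prod_int_eq_zpow {H A : Type*} [Group H] [CommGroup A]
    (hH : commutator H = ⊤) (f : H × Multiplicative ℤ →* A) (x : H)
    (p : H × Multiplicative ℤ) : f p = f (x, Multiplicative.ofAdd 1) ^ p.2.toAdd := by
  obtain ⟨a, n⟩ := p
  have hdecomp : ((a, n) : H × Multiplicative ℤ)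
      = (a * x ^ (-n.toAdd), 1) * (x, Multiplicative.ofAdd 1) ^ n.toAdd := by
    ext
    · simp
    · simp [← ofAdd_zsmul]
  have hkill : f (a * x ^ (-n.toAdd), 1) = 1 :=
    (f.comp (MonoidHom.inl H _)).eq_one_of_commutator_eq_top hH _
  conv_lhs => rw [hdecomp, map_mul, map_zpow, hkill, one_mul]

theorem infinite_of_map_eq_ofAdd_one {G : Type*} [Group G] (f : G →* Multiplicative ℤ) (g : G)
    (hg : f g = Multiplicative.ofAdd 1) : Infinite G :=
  Infinite.of_surjective f fun n => ⟨g ^ n.toAdd, by simp [hg, ← ofAdd_zsmul]⟩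

namespace Amalg

open Monoid

variable {H : Bool → Type*} [∀ i, Group (H i)] (h : ∀ i, H i)

theorem of_amalgU (i : Bool) :
    PushoutI.of (φ := amalgMap h) i (amalgU h i) = PushoutI.base (amalgMap h) (.ofAdd 1) := by
  rw [← PushoutI.of_apply_eq_base (amalgMap h) i]
  simp [amalgMap]

def height : Amalg H h →* Multiplicative ℤ :=
  PushoutI.lift (fun i => MonoidHom.snd (H i) (Multiplicative ℤ)) (MonoidHom.id _) fun i => by
    ext; simp [amalgMap, amalgU]

@[simp]
theorem height_base (n : Multiplicative ℤ) : height h (PushoutI.base (amalgMap h) n) = n :=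
  PushoutI.lift_base _ _ _ n

theorem map_mem_zpowers_map_base {A : Type*} [CommGroup A] (hH : ∀ i, commutator (H i) = ⊤)
    (F : Amalg H h →* A) (g : Amalg H h) :
    F g ∈ Subgroup.zpowers (F (PushoutI.base (amalgMap h) (.ofAdd 1))) := by
  have hof (i : Bool) (p : H i × Multiplicative ℤ) :
      F (PushoutI.of i p) ∈ Subgroup.zpowers (F (PushoutI.base (amalgMap h) (.ofAdd 1))) := by
    have key := (F.comp (PushoutI.of i)).map_prod_int_eq_zpow (hH i) (h i) p
    rw [MonoidHom.comp_apply, MonoidHom.comp_apply, ← amalgU, of_amalgU] at key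
    rw [key]
    exact Subgroup.zpow_mem_zpowers _ _
  induction g using PushoutI.induction_on with
  | of i p => exact hof i p
  | base m => exact PushoutI.of_apply_eq_base (amalgMap h) true m ▸ hof true _
  | mul x y hx hy => exact map_mul F x y ▸ Subgroup.mul_mem _ hx hy

end Amalg

theorem stmt_16_general (H : Bool → Type*) [∀ i, Group (H i)]
    (hObr : ∀ i, IsObraztsov (H i))
    (h : ∀ i, H i) :
    IsCyclic (Abelianization (Amalg H h)) ∧
    Infinite (Abelianization (Amalg H h)) ∧
    Monoid.PushoutI.of (φ := amalgMap h) true (amalgU h true) ∉ commutator (Amalg H h) := by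
  rw [Amalg.of_amalgU]
  set u := Monoid.PushoutI.base (amalgMap h) (Multiplicative.ofAdd 1)
  have hgen (x : Abelianization (Amalg H h)) : x ∈ Subgroup.zpowers (Abelianization.of u) := by
    obtain ⟨g, rfl⟩ := QuotientGroup.mk'_surjective _ x
    exact Amalg.map_mem_zpowers_map_base h (fun i => (hObr i).commutator_eq_top) _ g
  refine ⟨⟨⟨Abelianization.of u, hgen⟩⟩, ?_, fun hu => ?_⟩
  · exact infinite_of_map_eq_ofAdd_one (Abelianization.lift (Amalg.height h)) (.of u)
      (by simp [u])
  · simpa [u] using Abelianization.commutator_subset_ker (Amalg.height h) hu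

/-- For the amalgam `G` of two Obraztsov groups crossed with `ℤ`, amalgamated along
`u₁ = u₂` where `u i = (h i, 1)` with `h i` generating a maximal cyclic subgroup, the
abelianization of `G` is infinite cyclic and `u ∉ [G,G]`. -/
theorem stmt_16 (H : Bool → Type*) [∀ i, Group (H i)]
    (hObr : ∀ i, IsObraztsov (H i))
    (h : ∀ i, H i) (hmax : ∀ i, IsMaxCyclicGen (h i)) :
    IsCyclic (Abelianization (Amalg H h)) ∧
    Infinite (Abelianization (Amalg H h)) ∧
    Monoid.PushoutI.of (φ := amalgMap h) true (amalgU h true) ∉ commutator (Amalg H h) :=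
  stmt_16_general H hObr h
end

section
/- Let G be the amalgamated product defined in the context. Then G is generated by three elements: there exists a set S ⊆ G with |S| ≤ 3 whose generated subgroup is all of G. -/
/-!
Since `⟨hᵢ⟩` is maximal cyclic and every proper subgroup of `Hᵢ` is cyclic, `Hᵢ` is generated by
`hᵢ` together with any `bᵢ ∉ ⟨hᵢ⟩`; as `Hᵢ` has trivial center, `hᵢ` and `bᵢ` do not commute.
Then `uᵢ = (hᵢ, 1)` and `(bᵢ, 0)` generate `Hᵢ × ℤ`: the elements `(g, 0)` of the subgroup they
generate form a normal subgroup of the simple group `Hᵢ` containing the commutator of `hᵢ` and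
`bᵢ`, hence all of `Hᵢ`. As `u₁ = u₂` in `G`, the three elements `u₁`, `(b₁, 0)`, `(b₂, 0)`
generate both factors, hence `G`.
-/

open Subgroup Multiplicative
open scoped commutatorElement

theorem Multiplicative.zpowers_ofAdd_one : zpowers (ofAdd (1 : ℤ)) = ⊤ :=
  eq_top_iff.2 fun s _ => ⟨toAdd s, show ofAdd 1 ^ toAdd s = s by
    rw [← ofAdd_zsmul, smul_eq_mul, mul_one, ofAdd_toAdd]⟩

theorem Monoid.PushoutI.eq_top_of_range_of_le {ι : Type*} [Nonempty ι] {G : ι → Type*}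
    [∀ i, Group (G i)] {B : Type*} [Group B] {φ : ∀ i, B →* G i} {K : Subgroup (PushoutI φ)}
    (hK : ∀ i, (of i : G i →* PushoutI φ).range ≤ K) : K = ⊤ := by
  rw [eq_top_iff']
  intro g
  induction g using Monoid.PushoutI.induction_on with
  | of i g => exact hK i ⟨g, rfl⟩
  | base b => exact hK (Classical.arbitrary ι) ⟨_, of_apply_eq_base φ _ b⟩
  | mul x y hx hy => exact K.mul_mem hx hy

section

variable {H : Type*} [Group H]

theorem not_commute_of_closure_pair_eq_top [Nontrivial H] (hz : center H = ⊥) {x y : H}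
    (hxy : closure {x, y} = ⊤) : ¬Commute x y := by
  intro hc
  have hcen : centralizer {x, y} = center H := by
    rw [← centralizer_closure, hxy, coe_top, centralizer_univ]
  have hle : closure {x, y} ≤ center H := by
    rw [closure_le, ← hcen]
    refine Set.pair_subset ?_ ?_ <;> rw [SetLike.mem_coe, mem_centralizer_iff] <;>
      rintro z (rfl | rfl)
    exacts [rfl, hc.eq.symm, hc.eq, rfl]
  rw [hxy, hz] at hle
  exact top_ne_bot (le_bot_iff.1 hle)

theorem closure_pair_prod_ofAdd_one_eq_top [IsSimpleGroup H] {x y : H}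
    (hxy : closure {x, y} = ⊤) (hc : ¬Commute x y) :
    closure {(x, ofAdd (1 : ℤ)), (y, 1)} = (⊤ : Subgroup (H × Multiplicative ℤ)) := by
  set K := closure {((x, ofAdd (1 : ℤ)) : H × Multiplicative ℤ), (y, 1)}
  have hxK : (x, ofAdd (1 : ℤ)) ∈ K := subset_closure (by simp)
  have hyK : (y, 1) ∈ K := subset_closure (by simp)
  have hfst : K.map (MonoidHom.fst _ _) = ⊤ := by
    rw [MonoidHom.map_closure, Set.image_pair]
    exact hxy
  set N := K.comap (MonoidHom.inl H (Multiplicative ℤ))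
  have hN : N.Normal := ⟨fun g hg a => by
    obtain ⟨⟨a, s⟩, hk, rfl⟩ : a ∈ K.map (MonoidHom.fst _ _) := hfst ▸ mem_top _
    simpa [N] using K.mul_mem (K.mul_mem hk hg) (K.inv_mem hk)⟩
  have hcomm : ⁅x, y⁆ ∈ N := by
    simpa [N, commutatorElement_def] using
      K.mul_mem (K.mul_mem (K.mul_mem hxK hyK) (K.inv_mem hxK)) (K.inv_mem hyK)
  have hN_top : N = ⊤ := hN.eq_bot_or_eq_top.resolve_left fun hbot => hc <|
    commutatorElement_eq_one_iff_commute.1 (by rwa [hbot, mem_bot] at hcomm)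
  have htK : (1, ofAdd (1 : ℤ)) ∈ K := by
    simpa using K.mul_mem (K.inv_mem (show x ∈ N from hN_top ▸ mem_top x)) hxK
  rw [eq_top_iff, ← top_prod_top, prod_le_iff, map_le_iff_le_comap, map_le_iff_le_comap,
    ← zpowers_ofAdd_one, zpowers_le]
  exact ⟨hN_top.ge, htK⟩

theorem IsMaxCyclicGen.closure_pair_eq_top {h b : H} (hmax : IsMaxCyclicGen h)
    (hcyc : ∀ K : Subgroup H, K ≠ ⊤ → IsCyclic K) (hb : b ∉ zpowers h) :
    closure {h, b} = ⊤ := by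
  by_contra hne
  obtain ⟨w, hw⟩ := (closure {h, b}).isCyclic_iff_exists_zpowers_eq_top.1 (hcyc _ hne)
  have heq := hmax w (zpowers_le.2 (hw ▸ subset_closure (by simp)))
  exact hb (heq ▸ hw ▸ subset_closure (by simp))

theorem IsObraztsov.isSimpleGroup (hObr : IsObraztsov H) : IsSimpleGroup H := hObr.2.1

theorem IsObraztsov.center_eq_bot (hObr : IsObraztsov H) : center H = ⊥ := hObr.2.2.1

theorem IsObraztsov.isCyclic_of_ne_top (hObr : IsObraztsov H) (K : Subgroup H) (hK : K ≠ ⊤) :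
    IsCyclic K := by
  obtain rfl | hbot := eq_or_ne K ⊥
  · infer_instance
  · exact (hObr.2.2.2.2.2 K hbot hK).1

theorem IsObraztsov.exists_closure_pair_eq_top (hObr : IsObraztsov H) {h : H}
    (hmax : IsMaxCyclicGen h) : ∃ b, closure {h, b} = ⊤ ∧ ¬Commute h b := by
  have := hObr.isSimpleGroup
  obtain ⟨b, hb⟩ : ∃ b, b ∉ zpowers h := by
    by_contra! hall
    refine not_commute_of_closure_pair_eq_top hObr.center_eq_bot ?_ (Commute.refl h)
    rw [Set.pair_eq_singleton, ← zpowers_eq_closure, eq_top_iff']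
    exact hall
  have hgen := hmax.closure_pair_eq_top hObr.isCyclic_of_ne_top hb
  exact ⟨b, hgen, not_commute_of_closure_pair_eq_top hObr.center_eq_bot hgen⟩

end

theorem amalg_of_eq_base {H : Bool → Type*} [∀ i, Group (H i)] (h : ∀ i, H i) (i : Bool) :
    Monoid.PushoutI.of (φ := amalgMap h) i (h i, ofAdd 1) =
      Monoid.PushoutI.base (amalgMap h) (ofAdd 1) := by
  rw [← Monoid.PushoutI.of_apply_eq_base _ i]
  simp [amalgMap, amalgU]

/-- The amalgam `G` of two Obraztsov groups crossed with `ℤ`, amalgamated along `u₁ = u₂`,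
is generated by three elements. -/
theorem stmt_19 (H : Bool → Type*) [∀ i, Group (H i)]
    (hObr : ∀ i, IsObraztsov (H i))
    (h : ∀ i, H i) (hmax : ∀ i, IsMaxCyclicGen (h i)) :
    ∃ S : Finset (Amalg H h), S.card ≤ 3 ∧ Subgroup.closure (S : Set (Amalg H h)) = ⊤ := by
  classical
  choose b hb hc using fun i => (hObr i).exists_closure_pair_eq_top (hmax i)
  have := fun i => (hObr i).isSimpleGroup
  refine ⟨{Monoid.PushoutI.base _ (ofAdd 1), Monoid.PushoutI.of true (b true, 1),
    Monoid.PushoutI.of false (b false, 1)}, Finset.card_le_three, ?_⟩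
  refine Monoid.PushoutI.eq_top_of_range_of_le fun i => ?_
  rw [MonoidHom.range_eq_map, ← closure_pair_prod_ofAdd_one_eq_top (hb i) (hc i),
    MonoidHom.map_closure, Set.image_pair]
  refine closure_mono ?_
  rw [amalg_of_eq_base]
  cases i <;> simp [Set.insert_subset_iff]
end
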